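/- Let L > 0 and let v = (v¹,v²) : ℝ×[0,1] → ℝ² be a C¹ vector field, L-periodic in the x variable, such that ∂₁v² − ∂₂v¹ = 0 on ℝ×[0,1] and ∫_{[0,L]×[0,1]} v¹ dx dy = 0. Then there exists a continuously differentiable function q : ℝ×[0,1] → ℝ, L-periodic in x, such that v = ∇q on ℝ×[0,1]. -/

import Mathlib

open Set intervalIntegral

open MeasureTheory

noncomputable def pdx (f : ℝ → ℝ → ℝ) (x y : ℝ) : ℝ :=
  fderiv ℝ (fun p : ℝ × ℝ => f p.1 p.2) (x, y) (1, 0)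

noncomputable def pdy (f : ℝ → ℝ → ℝ) (x y : ℝ) : ℝ :=
  fderiv ℝ (fun p : ℝ × ℝ => f p.1 p.2) (x, y) (0, 1)

lemma hd_x {f : ℝ → ℝ → ℝ} (hf : ContDiff ℝ 1 (fun p : ℝ × ℝ => f p.1 p.2)) (x y : ℝ) :
    HasDerivAt (fun a => f a y) (pdx f x y) x := by
  have h1 : HasDerivAt (fun a : ℝ => (a, y)) ((1 : ℝ), (0 : ℝ)) x :=
    (hasDerivAt_id x).prodMk (hasDerivAt_const x y)
  have h2 := ((hf.differentiable one_ne_zero) (x, y)).hasFDerivAt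
  exact h2.comp_hasDerivAt x h1

lemma hd_y {f : ℝ → ℝ → ℝ} (hf : ContDiff ℝ 1 (fun p : ℝ × ℝ => f p.1 p.2)) (x y : ℝ) :
    HasDerivAt (fun b => f x b) (pdy f x y) y := by
  have h1 : HasDerivAt (fun b : ℝ => (x, b)) ((0 : ℝ), (1 : ℝ)) y :=
    (hasDerivAt_const y x).prodMk (hasDerivAt_id y)
  have h2 := ((hf.differentiable one_ne_zero) (x, y)).hasFDerivAt
  exact h2.comp_hasDerivAt y h1

lemma cont_pdx {f : ℝ → ℝ → ℝ} (hf : ContDiff ℝ 1 (fun p : ℝ × ℝ => f p.1 p.2)) :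
    Continuous (fun p : ℝ × ℝ => pdx f p.1 p.2) :=
  (contDiff_one_iff_fderiv.mp hf).2.clm_apply continuous_const

lemma cont_pdy {f : ℝ → ℝ → ℝ} (hf : ContDiff ℝ 1 (fun p : ℝ × ℝ => f p.1 p.2)) :
    Continuous (fun p : ℝ × ℝ => pdy f p.1 p.2) :=
  (contDiff_one_iff_fderiv.mp hf).2.clm_apply continuous_const

/-- differentiation under the integral sign, fixed endpoints -/
lemma hasDerivAt_param {F G : ℝ → ℝ → ℝ}
    (hF : Continuous (fun p : ℝ × ℝ => F p.1 p.2))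
    (hG : Continuous (fun p : ℝ × ℝ => G p.1 p.2))
    (hd : ∀ x t, HasDerivAt (fun x' => F x' t) (G x t) x) (a b x₀ : ℝ) :
    HasDerivAt (fun x => ∫ t in a..b, F x t) (∫ t in a..b, G x₀ t) x₀ := by
  obtain ⟨C, hC⟩ : ∃ C, ∀ p ∈ Icc (x₀ - 1) (x₀ + 1) ×ˢ uIcc a b,
      ‖G p.1 p.2‖ ≤ C :=
    (isCompact_Icc.prod isCompact_uIcc).exists_bound_of_continuousOn hG.continuousOn
  refine (intervalIntegral.hasDerivAt_integral_of_dominated_loc_of_deriv_le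
    (F := F) (F' := G) (bound := fun _ => C) (Metric.ball_mem_nhds x₀ one_pos)
    (Filter.Eventually.of_forall fun x =>
      ((hF.comp (Continuous.prodMk_right x)).aestronglyMeasurable).restrict)
    ((hF.comp (Continuous.prodMk_right x₀)).intervalIntegrable a b)
    (((hG.comp (Continuous.prodMk_right x₀)).aestronglyMeasurable).restrict)
    (Filter.Eventually.of_forall fun t ht x hx => ?_)
    (intervalIntegrable_const)
    (Filter.Eventually.of_forall fun t _ x _ => hd x t)).2
  have hx' : x ∈ Icc (x₀ - 1) (x₀ + 1) := by
    have := Metric.mem_ball.mp hx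
    rw [Real.dist_eq] at this
    constructor <;> [linarith [abs_lt.mp this]; linarith [abs_lt.mp this]]
  exact hC (x, t) ⟨hx', uIoc_subset_uIcc ht⟩

lemma hasFDerivAt_prim {f : ℝ → ℝ → ℝ} (hf : ContDiff ℝ 1 (fun p : ℝ × ℝ => f p.1 p.2))
    (x₀ y₀ : ℝ) :
    HasFDerivAt (fun p : ℝ × ℝ => ∫ t in (0:ℝ)..p.2, f p.1 t)
      ((∫ t in (0:ℝ)..y₀, pdx f x₀ t) • ContinuousLinearMap.fst ℝ ℝ ℝ
        + f x₀ y₀ • ContinuousLinearMap.snd ℝ ℝ ℝ) (x₀, y₀) := by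
  have hFc : Continuous (fun p : ℝ × ℝ => f p.1 p.2) := hf.continuous
  have h1 : HasFDerivAt (fun p : ℝ × ℝ => ∫ t in (0:ℝ)..y₀, f p.1 t)
      ((∫ t in (0:ℝ)..y₀, pdx f x₀ t) • ContinuousLinearMap.fst ℝ ℝ ℝ) (x₀, y₀) := by
    have h := hasDerivAt_param hFc (cont_pdx hf) (fun x t => hd_x hf x t) 0 y₀ x₀
    exact h.comp_hasFDerivAt (f := Prod.fst) (x := ((x₀ : ℝ), y₀)) hasFDerivAt_fst
  have h2 : HasFDerivAt (fun p : ℝ × ℝ => ∫ t in y₀..p.2, f p.1 t)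
      (f x₀ y₀ • ContinuousLinearMap.snd ℝ ℝ ℝ) (x₀, y₀) := by
    rw [hasFDerivAt_iff_isLittleO_nhds_zero]
    rw [Asymptotics.isLittleO_iff]
    intro c hc
    obtain ⟨δ, hδ, hδ'⟩ := Metric.continuousAt_iff.mp (hFc.continuousAt (x := (x₀, y₀))) c hc
    filter_upwards [Metric.ball_mem_nhds (0 : ℝ × ℝ) hδ] with h hh
    rw [mem_ball_zero_iff] at hh
    have key : ∀ t ∈ Set.uIoc y₀ (y₀ + h.2), ‖f (x₀ + h.1) t - f x₀ y₀‖ ≤ c := by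
      intro t ht
      rw [Set.mem_uIoc] at ht
      have hty : |t - y₀| ≤ |h.2| := by
        rcases ht with ht | ht <;>
          exact abs_le.mpr ⟨by cases ht; linarith [le_abs_self h.2, neg_abs_le h.2],
            by cases ht; linarith [le_abs_self h.2, neg_abs_le h.2]⟩
      have hdist : dist ((x₀ + h.1, t) : ℝ × ℝ) (x₀, y₀) < δ := by
        rw [Prod.dist_eq]
        simp only [Real.dist_eq]
        have h1 : |x₀ + h.1 - x₀| = |h.1| := by ring_nf
        rw [h1]
        have hn1 : |h.1| ≤ ‖h‖ := by
          rw [Prod.norm_def]; exact le_max_left _ _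
        have hn2 : |h.2| ≤ ‖h‖ := by
          rw [Prod.norm_def]; exact le_max_right _ _
        exact max_lt (lt_of_le_of_lt hn1 hh) (lt_of_le_of_lt (hty.trans hn2) hh)
      have := hδ' hdist
      rw [Real.dist_eq] at this
      exact le_of_lt this
    have hint : IntervalIntegrable (fun t => f (x₀ + h.1) t) volume y₀ (y₀ + h.2) :=
      (hFc.comp (Continuous.prodMk_right (x₀ + h.1))).intervalIntegrable _ _
    have heq : (∫ t in y₀..(y₀ + h.2), f (x₀ + h.1) t) - (f x₀ y₀ * h.2)
        = ∫ t in y₀..(y₀ + h.2), (f (x₀ + h.1) t - f x₀ y₀) := by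
      rw [intervalIntegral.integral_sub hint intervalIntegrable_const,
        intervalIntegral.integral_const]
      simp [smul_eq_mul]; ring
    have hb := intervalIntegral.norm_integral_le_of_norm_le_const
      (f := fun t => f (x₀ + h.1) t - f x₀ y₀) (a := y₀) (b := y₀ + h.2) (C := c) key
    simp only [Prod.fst_add, Prod.snd_add, intervalIntegral.integral_same,
      ContinuousLinearMap.coe_smul', Pi.smul_apply, ContinuousLinearMap.coe_snd',
      smul_eq_mul, sub_zero]
    calc ‖(∫ t in y₀..(y₀ + h.2), f (x₀ + h.1) t) - f x₀ y₀ * h.2‖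
        = ‖∫ t in y₀..(y₀ + h.2), (f (x₀ + h.1) t - f x₀ y₀)‖ := by rw [heq]
      _ ≤ c * |y₀ + h.2 - y₀| := hb
      _ ≤ c * ‖h‖ := by
          have : |y₀ + h.2 - y₀| = |h.2| := by ring_nf
          rw [this]
          have hn2 : |h.2| ≤ ‖h‖ := by rw [Prod.norm_def]; exact le_max_right _ _
          exact mul_le_mul_of_nonneg_left hn2 (le_of_lt hc)
  have heqfun : (fun p : ℝ × ℝ => ∫ t in (0:ℝ)..p.2, f p.1 t)
      = fun p : ℝ × ℝ => (∫ t in (0:ℝ)..y₀, f p.1 t) + ∫ t in y₀..p.2, f p.1 t := by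
    funext p
    have hi1 : IntervalIntegrable (fun t => f p.1 t) volume 0 y₀ :=
      (hFc.comp (Continuous.prodMk_right p.1)).intervalIntegrable 0 y₀
    have hi2 : IntervalIntegrable (fun t => f p.1 t) volume y₀ p.2 :=
      (hFc.comp (Continuous.prodMk_right p.1)).intervalIntegrable y₀ p.2
    exact (intervalIntegral.integral_add_adjacent_intervals hi1 hi2).symm
  rw [heqfun]
  exact h1.add h2

lemma contDiff_prim {f : ℝ → ℝ → ℝ} (hf : ContDiff ℝ 1 (fun p : ℝ × ℝ => f p.1 p.2)) :
    ContDiff ℝ 1 (fun p : ℝ × ℝ => ∫ t in (0:ℝ)..p.2, f p.1 t) := by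
  rw [contDiff_one_iff_fderiv]
  refine ⟨fun p => (hasFDerivAt_prim hf p.1 p.2).differentiableAt, ?_⟩
  have heq : (fderiv ℝ fun p : ℝ × ℝ => ∫ t in (0:ℝ)..p.2, f p.1 t)
      = fun p : ℝ × ℝ => (∫ t in (0:ℝ)..p.2, pdx f p.1 t) • ContinuousLinearMap.fst ℝ ℝ ℝ
        + f p.1 p.2 • ContinuousLinearMap.snd ℝ ℝ ℝ := by
    funext p
    exact (hasFDerivAt_prim hf p.1 p.2).fderiv
  rw [heq]
  have h1 : Continuous fun p : ℝ × ℝ => ∫ t in (0:ℝ)..p.2, pdx f p.1 t :=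
    intervalIntegral.continuous_parametric_primitive_of_continuous
      (f := fun x t => pdx f x t) (cont_pdx hf)
  exact (h1.smul continuous_const).add ((hf.continuous.smul continuous_const))

/-- scalar curl ∂₁v² − ∂₂v¹ of a planar vector field -/
noncomputable def curl2 (f : ℝ → ℝ → ℝ × ℝ) (x y : ℝ) : ℝ :=
  deriv (fun a => (f a y).2) x - deriv (fun b => (f x b).1) y

theorem periodic_de_rham
    (L : ℝ) (hL : 0 < L)
    (v : ℝ → ℝ → ℝ × ℝ)
    (hv : ContDiff ℝ 1 (fun q : ℝ × ℝ => v q.1 q.2))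
    (hper : ∀ x : ℝ, ∀ y ∈ Icc (0:ℝ) 1, v (x + L) y = v x y)
    (hcurl : ∀ x : ℝ, ∀ y ∈ Icc (0:ℝ) 1, curl2 v x y = 0)
    (hmean : (∫ x in (0:ℝ)..L, ∫ y in (0:ℝ)..1, (v x y).1) = 0) :
    ∃ q : ℝ → ℝ → ℝ,
      ContDiff ℝ 1 (fun w : ℝ × ℝ => q w.1 w.2) ∧
      (∀ x : ℝ, ∀ y ∈ Icc (0:ℝ) 1, q (x + L) y = q x y) ∧
      (∀ x : ℝ, ∀ y ∈ Icc (0:ℝ) 1,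
        deriv (fun a => q a y) x = (v x y).1 ∧
        deriv (fun b => q x b) y = (v x y).2) := by
  have hf1 : ContDiff ℝ 1 (fun p : ℝ × ℝ => (fun a b => (v a b).1) p.1 p.2) :=
    contDiff_fst.comp hv
  have hf2 : ContDiff ℝ 1 (fun p : ℝ × ℝ => (fun a b => (v a b).2) p.1 p.2) :=
    contDiff_snd.comp hv
  have hf1c : Continuous (fun p : ℝ × ℝ => (v p.1 p.2).1) := hf1.continuous
  have hf2c : Continuous (fun p : ℝ × ℝ => (v p.1 p.2).2) := hf2.continuous
  have hgc : Continuous (fun t : ℝ => (v t 0).1) :=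
    hf1c.comp (continuous_id.prodMk continuous_const)
  -- the horizontal antiderivative
  have hA : ∀ x : ℝ, HasDerivAt (fun x' => ∫ t in (0:ℝ)..x', (v t 0).1) ((v x 0).1) x :=
    fun x => (hgc.integral_hasStrictDerivAt 0 x).hasDerivAt
  -- the function I y = ∫₀ᴸ v¹(t,y) dt
  set I : ℝ → ℝ := fun y => ∫ t in (0:ℝ)..L, (v t y).1 with hIdef
  have hIder : ∀ y : ℝ, HasDerivAt I
      (∫ t in (0:ℝ)..L, pdy (fun a b => (v a b).1) t y) y := by
    intro y
    exact hasDerivAt_param (F := fun y t => (v t y).1)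
      (G := fun y t => pdy (fun a b => (v a b).1) t y)
      (hf1c.comp (continuous_snd.prodMk continuous_fst))
      ((cont_pdy (f := fun a b => (v a b).1) hf1).comp (continuous_snd.prodMk continuous_fst))
      (fun y t => hd_y (f := fun a b => (v a b).1) hf1 t y) 0 L y
  have hIzero : ∀ y ∈ Icc (0:ℝ) 1, HasDerivAt I 0 y := by
    intro y hy
    have h := hIder y
    have e : (∫ t in (0:ℝ)..L, pdy (fun a b => (v a b).1) t y) = 0 := by
      have ec : EqOn (fun t => pdy (fun a b => (v a b).1) t y)
          (fun t => pdx (fun a b => (v a b).2) t y) (uIcc (0:ℝ) L) := by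
        intro t _
        have hc := hcurl t y hy
        unfold curl2 at hc
        have d1 : deriv (fun a => (v a y).2) t = pdx (fun a b => (v a b).2) t y :=
          (hd_x (f := fun a b => (v a b).2) hf2 t y).deriv
        have d2 : deriv (fun b => (v t b).1) y = pdy (fun a b => (v a b).1) t y :=
          (hd_y (f := fun a b => (v a b).1) hf1 t y).deriv
        rw [d1, d2] at hc
        show pdy (fun a b => (v a b).1) t y = pdx (fun a b => (v a b).2) t y
        linarith
      rw [intervalIntegral.integral_congr ec]
      have hftc : (∫ t in (0:ℝ)..L, pdx (fun a b => (v a b).2) t y)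
          = (v L y).2 - (v 0 y).2 :=
        intervalIntegral.integral_eq_sub_of_hasDerivAt
          (f := fun a => (v a y).2) (fun t _ => hd_x (f := fun a b => (v a b).2) hf2 t y)
          (((cont_pdx (f := fun a b => (v a b).2) hf2).comp (continuous_id.prodMk continuous_const)).intervalIntegrable 0 L)
      rw [hftc]
      have hpL := hper 0 y hy
      rw [zero_add] at hpL
      rw [hpL, sub_self]
    rw [e] at h
    exact h
  have hIconst : ∀ y ∈ Icc (0:ℝ) 1, I y = I 0 := by
    have hIcont : Continuous I := by
      have : Differentiable ℝ I := fun y => (hIder y).differentiableAt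
      exact this.continuous
    exact constant_of_has_deriv_right_zero hIcont.continuousOn
      (fun y hy => (hIzero y (Ico_subset_Icc_self hy)).hasDerivWithinAt)
  -- Fubini: I 0 = 0
  have hI0 : I 0 = 0 := by
    have hIntOn : IntegrableOn (fun p : ℝ × ℝ => (v p.1 p.2).1)
        (Ioc (0:ℝ) L ×ˢ Ioc (0:ℝ) 1) volume :=
      (hf1c.continuousOn.integrableOn_compact (isCompact_Icc.prod isCompact_Icc)).mono_set
        (prod_mono Ioc_subset_Icc_self Ioc_subset_Icc_self)
    have hIntP : Integrable (Function.uncurry (fun x y => (v x y).1))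
        ((volume.restrict (Ioc (0:ℝ) L)).prod (volume.restrict (Ioc (0:ℝ) 1))) := by
      rw [Measure.prod_restrict, ← Measure.volume_eq_prod]
      exact hIntOn
    have hswap : (∫ x in Ioc (0:ℝ) L, ∫ y in Ioc (0:ℝ) 1, (v x y).1)
        = ∫ y in Ioc (0:ℝ) 1, ∫ x in Ioc (0:ℝ) L, (v x y).1 :=
      MeasureTheory.integral_integral_swap hIntP
    have m1 : (∫ x in (0:ℝ)..L, ∫ y in (0:ℝ)..1, (v x y).1)
        = ∫ x in Ioc (0:ℝ) L, ∫ y in Ioc (0:ℝ) 1, (v x y).1 := by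
      rw [intervalIntegral.integral_of_le hL.le]
      exact setIntegral_congr_fun measurableSet_Ioc
        (fun x _ => intervalIntegral.integral_of_le zero_le_one)
    have m2 : (∫ y in Ioc (0:ℝ) 1, ∫ x in Ioc (0:ℝ) L, (v x y).1)
        = ∫ y in Ioc (0:ℝ) 1, I 0 := by
      refine setIntegral_congr_fun measurableSet_Ioc (fun y hy' => ?_)
      have e1 : (∫ x in Ioc (0:ℝ) L, (v x y).1) = I y :=
        (intervalIntegral.integral_of_le hL.le).symm
      rw [e1]
      exact hIconst y ⟨hy'.1.le, hy'.2⟩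
    have m3 : (∫ _y in Ioc (0:ℝ) 1, I 0) = I 0 := by
      simp [Real.volume_Ioc]
    rw [m1, hswap, m2, m3] at hmean
    exact hmean
  have hzero : (∫ t in (0:ℝ)..L, (v t 0).1) = 0 := hI0
  -- the potential
  refine ⟨fun x y => (∫ t in (0:ℝ)..x, (v t 0).1) + ∫ t in (0:ℝ)..y, (v x t).2, ?_, ?_, ?_⟩
  · -- smoothness
    have hAcd : ContDiff ℝ 1 (fun x : ℝ => ∫ t in (0:ℝ)..x, (v t 0).1) := by
      rw [contDiff_one_iff_deriv]
      refine ⟨fun x => (hA x).differentiableAt, ?_⟩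
      have : (deriv fun x : ℝ => ∫ t in (0:ℝ)..x, (v t 0).1) = fun x => (v x 0).1 :=
        funext fun x => (hA x).deriv
      rw [this]
      exact hgc
    exact (hAcd.comp contDiff_fst).add (contDiff_prim (f := fun a b => (v a b).2) hf2)
  · -- periodicity
    intro x y hy
    show (∫ t in (0:ℝ)..(x + L), (v t 0).1) + (∫ t in (0:ℝ)..y, (v (x + L) t).2)
        = (∫ t in (0:ℝ)..x, (v t 0).1) + ∫ t in (0:ℝ)..y, (v x t).2
    have e1 : (∫ t in (0:ℝ)..y, (v (x + L) t).2) = ∫ t in (0:ℝ)..y, (v x t).2 := by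
      refine intervalIntegral.integral_congr (fun t ht => ?_)
      have ht' : t ∈ Icc (0:ℝ) 1 := by
        rw [uIcc_of_le hy.1] at ht
        exact ⟨ht.1, ht.2.trans hy.2⟩
      rw [hper x t ht']
    have e2 : (∫ t in (0:ℝ)..(x + L), (v t 0).1)
        = (∫ t in (0:ℝ)..x, (v t 0).1) + ∫ t in x..(x + L), (v t 0).1 :=
      (intervalIntegral.integral_add_adjacent_intervals
        (hgc.intervalIntegrable 0 x) (hgc.intervalIntegrable x (x + L))).symm
    have hperg : Function.Periodic (fun t : ℝ => (v t 0).1) L := by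
      intro t
      show (v (t + L) 0).1 = (v t 0).1
      rw [hper t 0 ⟨le_rfl, zero_le_one⟩]
    have e3 : (∫ t in x..(x + L), (v t 0).1) = ∫ t in (0:ℝ)..(0 + L), (v t 0).1 :=
      hperg.intervalIntegral_add_eq x 0
    rw [e1, e2, e3, zero_add, hzero, add_zero]
  · -- gradient identities
    intro x y hy
    constructor
    · -- derivative in x
      have h1 : HasDerivAt
          (fun a => (∫ t in (0:ℝ)..a, (v t 0).1) + ∫ t in (0:ℝ)..y, (v a t).2)
          ((v x 0).1 + ∫ t in (0:ℝ)..y, pdx (fun a b => (v a b).2) x t) x :=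
        (hA x).add (hasDerivAt_param (F := fun a t => (v a t).2)
          (G := fun a t => pdx (fun a b => (v a b).2) a t)
          hf2c (cont_pdx (f := fun a b => (v a b).2) hf2) (fun a t => hd_x (f := fun a b => (v a b).2) hf2 a t) 0 y x)
      have e : (∫ t in (0:ℝ)..y, pdx (fun a b => (v a b).2) x t)
          = (v x y).1 - (v x 0).1 := by
        have ec : EqOn (fun t => pdx (fun a b => (v a b).2) x t)
            (fun t => pdy (fun a b => (v a b).1) x t) (uIcc (0:ℝ) y) := by
          intro t ht
          have ht' : t ∈ Icc (0:ℝ) 1 := by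
            rw [uIcc_of_le hy.1] at ht
            exact ⟨ht.1, ht.2.trans hy.2⟩
          have hc := hcurl x t ht'
          unfold curl2 at hc
          have d1 : deriv (fun a => (v a t).2) x = pdx (fun a b => (v a b).2) x t :=
            (hd_x (f := fun a b => (v a b).2) hf2 x t).deriv
          have d2 : deriv (fun b => (v x b).1) t = pdy (fun a b => (v a b).1) x t :=
            (hd_y (f := fun a b => (v a b).1) hf1 x t).deriv
          rw [d1, d2] at hc
          show pdx (fun a b => (v a b).2) x t = pdy (fun a b => (v a b).1) x t
          linarith
        rw [intervalIntegral.integral_congr ec]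
        exact intervalIntegral.integral_eq_sub_of_hasDerivAt
          (f := fun b => (v x b).1) (fun t _ => hd_y (f := fun a b => (v a b).1) hf1 x t)
          (((cont_pdy (f := fun a b => (v a b).1) hf1).comp (Continuous.prodMk_right x)).intervalIntegrable 0 y)
      show deriv (fun a => (∫ t in (0:ℝ)..a, (v t 0).1) + ∫ t in (0:ℝ)..y, (v a t).2) x
          = (v x y).1
      rw [h1.deriv, e]
      ring
    · -- derivative in y
      have hc2 : Continuous (fun t : ℝ => (v x t).2) := hf2c.comp (Continuous.prodMk_right x)
      have h1 : HasDerivAt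
          (fun b => (∫ t in (0:ℝ)..x, (v t 0).1) + ∫ t in (0:ℝ)..b, (v x t).2)
          (0 + (v x y).2) y :=
        (hasDerivAt_const y _).add ((hc2.integral_hasStrictDerivAt 0 y).hasDerivAt)
      show deriv (fun b => (∫ t in (0:ℝ)..x, (v t 0).1) + ∫ t in (0:ℝ)..b, (v x t).2) y
          = (v x y).2
      rw [h1.deriv, zero_add]
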